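/- arXiv:1702.06471 — 4 statements merged into one kernel-verified Lean document; each statement's English description precedes it below -/
import Mathlib

section
/- Let A be a unital commutative C*-algebra, f₀ ∈ A with ‖f₀‖ < 1, and define T(f) = (f - f₀)·(1 - f₀*·f)⁻¹ on the open unit ball of A. Then T is Lipschitz on the open unit ball with Lipschitz constant 1/(1 - ‖f₀‖)²; that is, for all f, g with ‖f‖ < 1 and ‖g‖ < 1, ‖T(f) - T(g)‖ ≤ ‖f - g‖ / (1 - ‖f₀‖)². -/
/-!
The difference of two values factors as
`T f - T g = (1 - f₀ f₀*) (f - g) (1 - f₀* f)⁻¹ (1 - f₀* g)⁻¹`.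
Since `0 ≤ f₀ f₀* ≤ 1`, the first factor has norm at most `1`; since `‖f₀* f‖ ≤ ‖f₀‖ < 1`, the
Neumann series bounds the norm of each inverse by `1 / (1 - ‖f₀‖)`.
-/

lemma CStarAlgebra.norm_one_sub_mul_star_le_one {A : Type*} [CStarAlgebra A] {a : A}
    (ha : ‖a‖ ≤ 1) : ‖1 - a * star a‖ ≤ 1 := by
  let _ := CStarAlgebra.spectralOrder A
  have _ := CStarAlgebra.spectralOrderedRing A
  have hle : a * star a ≤ 1 := by
    rw [← norm_le_one_iff_of_nonneg _ (mul_star_self_nonneg a), CStarRing.norm_self_mul_star]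
    exact mul_le_one₀ ha (norm_nonneg a) ha
  rw [norm_le_one_iff_of_nonneg _ (sub_nonneg.2 hle)]
  exact sub_le_self _ (mul_star_self_nonneg a)

theorem norm_ring_inverse_one_sub_le {R : Type*} [NormedRing R] [NormOneClass R]
    [HasSummableGeomSeries R] {x : R} {r : ℝ} (hx : ‖x‖ ≤ r) (hr : r < 1) :
    ‖Ring.inverse (1 - x)‖ ≤ (1 - r)⁻¹ := by
  have hx1 : ‖x‖ < 1 := hx.trans_lt hr
  calc ‖Ring.inverse (1 - x)‖ = ‖∑' n, x ^ n‖ := by rw [geom_series_eq_inverse x hx1]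
    _ ≤ (1 - ‖x‖)⁻¹ := by simpa using tsum_geometric_le_of_norm_lt_one x hx1
    _ ≤ (1 - r)⁻¹ := by gcongr

theorem mobius_sub_mobius {R : Type*} [CommRing R] {a b f g : R}
    (hf : IsUnit (1 - b * f)) (hg : IsUnit (1 - b * g)) :
    (f - a) * Ring.inverse (1 - b * f) - (g - a) * Ring.inverse (1 - b * g) =
      (1 - a * b) * (f - g) * (Ring.inverse (1 - b * f) * Ring.inverse (1 - b * g)) := by
  have hf' := Ring.mul_inverse_cancel _ hf
  have hg' := Ring.mul_inverse_cancel _ hg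
  linear_combination
    (g - a) * Ring.inverse (1 - b * g) * hf' - (f - a) * Ring.inverse (1 - b * f) * hg'

/-- The Möbius-type map `T(f) = (f - f₀)(1 - f₀* f)⁻¹` is Lipschitz on the open unit
ball of a unital commutative C*-algebra, with constant `1/(1 - ‖f₀‖)²`. -/
theorem mobius_lipschitz_on_ball
    {A : Type*} [NormedCommRing A] [StarRing A] [CStarRing A]
    [NormedAlgebra ℂ A] [StarModule ℂ A] [CompleteSpace A]
    (f₀ : A) (h₀ : ‖f₀‖ < 1)
    (T : A → A) (hT : ∀ f, T f = (f - f₀) * Ring.inverse (1 - star f₀ * f)) :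
    ∀ f g : A, ‖f‖ < 1 → ‖g‖ < 1 →
      ‖T f - T g‖ ≤ ‖f - g‖ / (1 - ‖f₀‖) ^ 2 := by
  intro f g hf hg
  nontriviality A
  let _ : CStarAlgebra A := { }
  have hmul : ∀ h : A, ‖h‖ < 1 → ‖star f₀ * h‖ ≤ ‖f₀‖ := fun h hh ↦
    (norm_mul_le _ _).trans <| by rw [norm_star]; exact mul_le_of_le_one_right (norm_nonneg _) hh.le
  have hunit : ∀ h : A, ‖h‖ < 1 → IsUnit (1 - star f₀ * h) := fun h hh ↦
    isUnit_one_sub_of_norm_lt_one ((hmul h hh).trans_lt h₀)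
  have hinv : ∀ h : A, ‖h‖ < 1 → ‖Ring.inverse (1 - star f₀ * h)‖ ≤ (1 - ‖f₀‖)⁻¹ := fun h hh ↦
    norm_ring_inverse_one_sub_le (hmul h hh) h₀
  rw [hT, hT, mobius_sub_mobius (hunit f hf) (hunit g hg)]
  calc _ ≤ ‖1 - f₀ * star f₀‖ * ‖f - g‖ *
        (‖Ring.inverse (1 - star f₀ * f)‖ * ‖Ring.inverse (1 - star f₀ * g)‖) := by
        refine (norm_mul_le _ _).trans ?_
        gcongr <;> exact norm_mul_le _ _
    _ ≤ 1 * ‖f - g‖ * ((1 - ‖f₀‖)⁻¹ * (1 - ‖f₀‖)⁻¹) := by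
        gcongr
        exacts [CStarAlgebra.norm_one_sub_mul_star_le_one h₀.le, hinv f hf, hinv g hg]
    _ = ‖f - g‖ / (1 - ‖f₀‖) ^ 2 := by rw [one_mul, div_eq_mul_inv, sq, mul_inv]
end

section
/- Let A be a unital commutative C*-algebra, f₀ ∈ A with ‖f₀‖ < 1, and T_{f₀}(f) = (f - f₀)·(1 - f₀*·f)⁻¹ defined on the open unit ball. Then T_{f₀} maps the open unit ball into itself and T_{-f₀} is a two-sided inverse of T_{f₀} on the open unit ball, so T_{f₀} is a bijection of the open unit ball onto itself. -/
/-!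
Composing a character `φ` with `T_g` gives the scalar Möbius map `T_{φ g}`, and on `ℂ` the identity
`|1 - w̄ z|² - |z - w|² = (1 - |z|²)(1 - |w|²)` shows that it maps the open disc into itself.
Since the Gelfand transform is an isometry onto `C(characterSpace ℂ A, ℂ)` and the character space
is compact, `‖T_g f‖ < 1`. The inversion `T_{-g} ∘ T_g = id` is a computation in any commutative
ring with involution in which `1 - g* f` and `1 - g* g` are invertible.
-/

open WeakDual

theorem map_ringInverse {M N F : Type*} [MonoidWithZero M] [MonoidWithZero N] [FunLike F M N]
    [MonoidHomClass F M N] (φ : F) {a : M} (ha : IsUnit a) :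
    φ (Ring.inverse a) = Ring.inverse (φ a) := by
  obtain ⟨u, rfl⟩ := ha
  rw [Ring.inverse_unit]
  simpa using (Ring.inverse_unit (Units.map (φ : M →* N) u)).symm

noncomputable def mobius {R : Type*} [Ring R] [StarRing R] (g f : R) : R :=
  (f - g) * Ring.inverse (1 - star g * f)

section CommRing

variable {R : Type*} [CommRing R] [StarRing R] {g f : R}

theorem mobius_mul_one_sub_star_mul (h : IsUnit (1 - star g * f)) :
    mobius g f * (1 - star g * f) = f - g := by
  rw [mobius, mul_assoc, Ring.inverse_mul_cancel _ h, mul_one]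

theorem mobius_neg_mobius (hgf : IsUnit (1 - star g * f)) (hgg : IsUnit (1 - star g * g)) :
    mobius (-g) (mobius g f) = f := by
  have hw := mobius_mul_one_sub_star_mul hgf
  set w := mobius g f
  have hden : (1 - star (-g) * w) * (1 - star g * f) = 1 - star g * g := by
    rw [star_neg]; linear_combination (star g) * hw
  have hnum : w - -g = f * (1 - star (-g) * w) := by
    refine hgf.mul_right_cancel ?_
    rw [mul_assoc, hden]
    linear_combination hw
  have hunit : IsUnit (1 - star (-g) * w) := isUnit_of_mul_isUnit_left (hden ▸ hgg)
  rw [mobius, hnum, Ring.mul_inverse_cancel_right _ _ hunit]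

end CommRing

theorem map_mobius {R S F : Type*} [Ring R] [StarRing R] [Ring S] [StarRing S] [FunLike F R S]
    [RingHomClass F R S] [StarHomClass F R S] (φ : F) {g f : R} (h : IsUnit (1 - star g * f)) :
    φ (mobius g f) = mobius (φ g) (φ f) := by
  rw [mobius, mobius, map_mul, map_ringInverse φ h]
  simp only [map_sub, map_one, map_mul, map_star]

theorem isUnit_one_sub_star_mul {R : Type*} [NormedRing R] [StarRing R] [NormedStarGroup R]
    [HasSummableGeomSeries R] {g f : R} (hg : ‖g‖ < 1) (hf : ‖f‖ ≤ 1) :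
    IsUnit (1 - star g * f) := by
  refine isUnit_one_sub_of_norm_lt_one ((norm_mul_le _ _).trans_lt ?_)
  rw [norm_star]
  exact mul_lt_one_of_nonneg_of_lt_one_left (norm_nonneg _) hg hf

theorem Complex.normSq_one_sub_star_mul_sub_normSq_sub (z w : ℂ) :
    normSq (1 - star w * z) - normSq (z - w) = (1 - normSq z) * (1 - normSq w) := by
  simp only [normSq_apply, star_def, sub_re, sub_im, mul_re, mul_im, one_re, one_im, conj_re,
    conj_im]
  ring

theorem Complex.norm_mobius_lt_one {z w : ℂ} (hz : ‖z‖ < 1) (hw : ‖w‖ < 1) :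
    ‖mobius w z‖ < 1 := by
  have hsq : ‖z - w‖ ^ 2 < ‖1 - star w * z‖ ^ 2 := by
    have key := normSq_one_sub_star_mul_sub_normSq_sub z w
    simp only [normSq_eq_norm_sq] at key
    have hz' : 0 < 1 - ‖z‖ ^ 2 := by nlinarith [norm_nonneg z]
    have hw' : 0 < 1 - ‖w‖ ^ 2 := by nlinarith [norm_nonneg w]
    linarith [mul_pos hz' hw']
  have hlt : ‖z - w‖ < ‖1 - star w * z‖ := lt_of_pow_lt_pow_left₀ 2 (norm_nonneg _) hsq
  rw [mobius, Ring.inverse_eq_inv', norm_mul, norm_inv, ← div_eq_mul_inv]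
  exact (div_lt_one ((norm_nonneg _).trans_lt hlt)).2 hlt

theorem norm_mobius_lt_one {A : Type*} [CommCStarAlgebra A] {g f : A} (hg : ‖g‖ < 1)
    (hf : ‖f‖ < 1) : ‖mobius g f‖ < 1 := by
  have hΓ (a : A) : ‖gelfandTransform ℂ A a‖ = ‖a‖ :=
    (gelfandTransform_isometry A).norm_map_of_map_zero (map_zero _) a
  have hφ (φ : characterSpace ℂ A) (a : A) : ‖φ a‖ ≤ ‖a‖ :=
    hΓ a ▸ (gelfandTransform ℂ A a).norm_coe_le_norm φ
  rw [← hΓ, ContinuousMap.norm_lt_iff _ one_pos]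
  intro φ
  rw [gelfandTransform_apply_apply, map_mobius φ (isUnit_one_sub_star_mul hg hf.le)]
  exact Complex.norm_mobius_lt_one ((hφ φ f).trans_lt hf) ((hφ φ g).trans_lt hg)

/-- The Möbius-type map `T_{f₀}(f) = (f - f₀)(1 - f₀* f)⁻¹` maps the open unit ball of
a unital commutative C*-algebra into itself, and `T_{-f₀}` is a two-sided inverse of
`T_{f₀}` on the open unit ball; hence `T_{f₀}` is a bijection of the ball onto itself. -/
theorem mobius_bijection_ball
    {A : Type*} [NormedCommRing A] [StarRing A] [CStarRing A]
    [NormedAlgebra ℂ A] [StarModule ℂ A] [CompleteSpace A]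
    (f₀ : A) (h₀ : ‖f₀‖ < 1)
    (T : A → A → A)
    (hT : ∀ g f, T g f = (f - g) * Ring.inverse (1 - star g * f)) :
    ∀ f : A, ‖f‖ < 1 →
      ‖T f₀ f‖ < 1 ∧ T (-f₀) (T f₀ f) = f ∧ T f₀ (T (-f₀) f) = f := by
  let _ : CommCStarAlgebra A := {}
  obtain rfl : T = mobius := funext₂ hT
  intro f hf
  have h₀' : ‖-f₀‖ < 1 := by rwa [norm_neg]
  refine ⟨norm_mobius_lt_one h₀ hf, ?_, ?_⟩
  · exact mobius_neg_mobius (isUnit_one_sub_star_mul h₀ hf.le) (isUnit_one_sub_star_mul h₀ h₀.le)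
  · simpa only [neg_neg] using mobius_neg_mobius (isUnit_one_sub_star_mul h₀' hf.le)
      (isUnit_one_sub_star_mul h₀' h₀'.le)
end

section
/- Let X be a complex Banach space, x a point of the unit sphere, and x* a norm-one functional with x*(x) = 1. Suppose for every ε > 0 there is δ > 0 such that y in the closed unit ball with Re(x*(y)) > 1 - δ implies ‖y - x‖ < ε. Then the function f = (1 + x*)/2 peaks strongly at x on the closed unit ball: f(x) = 1, and for every ε > 0 there is σ > 0 such that every y in the closed unit ball with ‖y - x‖ ≥ ε satisfies |f(y)| < 1 - σ. -/
/-! Since `‖z‖ ≤ 1` gives `‖1 + z‖² = 1 + 2 Re z + ‖z‖² ≤ 2 + 2 Re z`, the modulus of `(1 + z)/2`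
drops below `1` by at least a quarter of `1 - Re z`. Points of the ball at distance `≥ ε` from `x`
lie outside the slice `Re x* > 1 - δ`, so `|f| ≤ 1 - δ/4` there. -/

theorem Complex.norm_one_add_div_two_le {z : ℂ} (hz : ‖z‖ ≤ 1) :
    ‖(1 + z) / 2‖ ≤ 1 - (1 - z.re) / 4 := by
  have hsq : ‖1 + z‖ ^ 2 = 1 + 2 * z.re + ‖z‖ ^ 2 := by
    simp only [Complex.sq_norm, Complex.normSq_add, map_one, one_mul, Complex.conj_re]
    ring
  obtain ⟨hre₁, hre₂⟩ := abs_le.1 ((Complex.abs_re_le_norm z).trans hz)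
  have hle : ‖1 + z‖ ≤ 2 - (1 - z.re) / 2 := by
    refine (pow_le_pow_iff_left₀ (norm_nonneg _) (by linarith) two_ne_zero).1 ?_
    nlinarith [norm_nonneg z]
  rw [norm_div, Complex.norm_two]
  linarith

theorem half_one_add_functional_peaks_strongly_general
    {X : Type*} [NormedAddCommGroup X] [NormedSpace ℂ X]
    (x : X)
    (x' : X →L[ℂ] ℂ) (hx'norm : ‖x'‖ = 1) (hx'x : x' x = 1)
    (hslice : ∀ ε > 0, ∃ δ > 0, ∀ y : X, ‖y‖ ≤ 1 → 1 - δ < (x' y).re → ‖y - x‖ < ε)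
    (f : X → ℂ) (hf : ∀ y, f y = (1 + x' y) / 2) :
    f x = 1 ∧ ∀ ε > 0, ∃ σ > 0, ∀ y : X, ‖y‖ ≤ 1 → ε ≤ ‖y - x‖ →
      ‖f y‖ < 1 - σ := by
  refine ⟨by norm_num [hf, hx'x], fun ε hε => ?_⟩
  obtain ⟨δ, hδ, hslice⟩ := hslice ε hε
  refine ⟨δ / 8, by positivity, fun y hy hεy => ?_⟩
  have hre : (x' y).re ≤ 1 - δ := not_lt.1 fun h => (hslice y hy h).not_ge hεy
  have hnorm : ‖x' y‖ ≤ 1 := by simpa using x'.le_of_opNorm_le_of_le hx'norm.le hy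
  calc ‖f y‖ ≤ 1 - (1 - (x' y).re) / 4 := hf y ▸ Complex.norm_one_add_div_two_le hnorm
    _ < 1 - δ / 8 := by linarith

/-- If `x*` is a norming functional at a unit vector `x` whose real-part slices shrink
to `x`, then `f = (1 + x*)/2` peaks strongly at `x` on the closed unit ball. -/
theorem half_one_add_functional_peaks_strongly
    {X : Type*} [NormedAddCommGroup X] [NormedSpace ℂ X] [CompleteSpace X]
    (x : X) (hx : ‖x‖ = 1)
    (x' : X →L[ℂ] ℂ) (hx'norm : ‖x'‖ = 1) (hx'x : x' x = 1)
    (hslice : ∀ ε > 0, ∃ δ > 0, ∀ y : X, ‖y‖ ≤ 1 → 1 - δ < (x' y).re → ‖y - x‖ < ε)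
    (f : X → ℂ) (hf : ∀ y, f y = (1 + x' y) / 2) :
    f x = 1 ∧ ∀ ε > 0, ∃ σ > 0, ∀ y : X, ‖y‖ ≤ 1 → ε ≤ ‖y - x‖ →
      ‖f y‖ < 1 - σ :=
  half_one_add_functional_peaks_strongly_general x x' hx'norm hx'x hslice f hf
end

section
/- If X is a complex Banach space locally uniformly convex at a point x of its unit sphere, then x is a strong peak point for the ball algebra A(B) on the closed unit ball: there exists f in A(B) with f(x) = 1 such that for every ε > 0 there is δ > 0 with |f(y)| < 1 - δ whenever y is in the closed unit ball and ‖y - x‖ > ε. -/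
open Filter Topology

/-!
Take a norm-one functional `x*` with `x* x = 1`. Then `1 + x* y = x* (x + y)`, so
`|(1 + x* y) / 2| ≤ ‖x + y‖ / 2`, and `f = (1 + x*) / 2` can be close to `1` on the unit
ball only where `‖x + y‖` is close to `2`. Local uniform convexity at `x`, turned from its
sequential form into an `ε`-`δ` statement, says that such `y` are close to `x`.
-/

section LocallyUniformlyConvex

variable {X : Type*} [SeminormedAddCommGroup X]

lemma tendsto_norm_of_tendsto_norm_add {x : X} (hx : ‖x‖ ≤ 1) {y : ℕ → X}
    (hy : ∀ n, ‖y n‖ ≤ 1) (hxy : Tendsto (fun n => ‖x + y n‖) atTop (𝓝 2)) :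
    Tendsto (fun n => ‖y n‖) atTop (𝓝 1) := by
  have hlower : Tendsto (fun n => ‖x + y n‖ - 1) atTop (𝓝 1) := by
    convert hxy.sub_const 1; norm_num
  refine tendsto_of_tendsto_of_tendsto_of_le_of_le hlower tendsto_const_nhds (fun n => ?_) hy
  have := norm_add_le x (y n)
  linarith

lemma exists_pos_forall_norm_sub_lt_of_norm_add_gt {x : X} (hx : ‖x‖ ≤ 1)
    (hluc : ∀ y : ℕ → X, Tendsto (fun n => ‖y n‖) atTop (𝓝 1) →
      Tendsto (fun n => ‖x + y n‖) atTop (𝓝 2) →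
      Tendsto (fun n => ‖y n - x‖) atTop (𝓝 0))
    {ε : ℝ} (hε : 0 < ε) :
    ∃ δ > 0, ∀ y : X, ‖y‖ ≤ 1 → 2 - δ < ‖x + y‖ → ‖y - x‖ < ε := by
  by_contra! hcon
  choose y hy_le hy_add hy_far using fun n : ℕ => hcon (1 / (n + 1)) Nat.one_div_pos_of_nat
  have hadd : Tendsto (fun n => ‖x + y n‖) atTop (𝓝 2) := by
    have hlower : Tendsto (fun n : ℕ => 2 - 1 / ((n : ℝ) + 1)) atTop (𝓝 2) := by
      simpa using tendsto_one_div_add_atTop_nhds_zero_nat.const_sub (2 : ℝ)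
    refine tendsto_of_tendsto_of_tendsto_of_le_of_le hlower tendsto_const_nhds
      (fun n => (hy_add n).le) (fun n => ?_)
    linarith [norm_add_le x (y n), hy_le n]
  obtain ⟨n, hn⟩ := ((hluc y (tendsto_norm_of_tendsto_norm_add hx hy_le hadd) hadd).eventually
    (eventually_lt_nhds hε)).exists
  exact (hy_far n).not_gt hn

end LocallyUniformlyConvex

lemma ContinuousLinearMap.norm_one_add_apply_le {𝕜 X : Type*} [NontriviallyNormedField 𝕜]
    [SeminormedAddCommGroup X] [NormedSpace 𝕜 X] {g : X →L[𝕜] 𝕜} (hg : ‖g‖ ≤ 1)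
    {x : X} (hgx : g x = 1) (y : X) : ‖1 + g y‖ ≤ ‖x + y‖ := by
  calc ‖1 + g y‖ = ‖g (x + y)‖ := by rw [map_add, hgx]
    _ ≤ ‖g‖ * ‖x + y‖ := g.le_opNorm _
    _ ≤ ‖x + y‖ := mul_le_of_le_one_left (norm_nonneg _) hg

theorem luc_strong_peak_point_general
    {X : Type*} [NormedAddCommGroup X] [NormedSpace ℂ X]
    (x : X) (hx : ‖x‖ = 1)
    (hluc : ∀ y : ℕ → X, Tendsto (fun n => ‖y n‖) atTop (𝓝 1) →
      Tendsto (fun n => ‖x + y n‖) atTop (𝓝 2) →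
      Tendsto (fun n => ‖y n - x‖) atTop (𝓝 0)) :
    ∃ x' : X →L[ℂ] ℂ, ‖x'‖ = 1 ∧ (1 + x' x) / 2 = 1 ∧
      ∀ ε > 0, ∃ δ > 0, ∀ y : X, ‖y‖ ≤ 1 → ε < ‖y - x‖ →
        ‖(1 + x' y) / 2‖ < 1 - δ := by
  obtain ⟨g, hg, hgx⟩ := exists_dual_vector ℂ x (by simp [hx])
  rw [hx, RCLike.ofReal_one] at hgx
  refine ⟨g, hg, by rw [hgx]; norm_num, fun ε hε => ?_⟩
  obtain ⟨δ, hδ, hnear⟩ := exists_pos_forall_norm_sub_lt_of_norm_add_gt hx.le hluc hε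
  refine ⟨δ / 4, by positivity, fun y hy hfar => ?_⟩
  have hadd : ‖x + y‖ ≤ 2 - δ := not_lt.mp fun h => (hnear y hy h).not_gt hfar
  calc ‖(1 + g y) / 2‖ = ‖1 + g y‖ / 2 := by simp
    _ ≤ ‖x + y‖ / 2 := by gcongr; exact g.norm_one_add_apply_le hg.le hgx y
    _ < 1 - δ / 4 := by linarith

/-- If a complex Banach space is locally uniformly convex at a point `x` of its unit
sphere, then `x` is a strong peak point for the ball algebra: there is a function of
the form `f = (1 + x*)/2`, with `x*` a norm-one continuous linear functional, such
that `f(x) = 1` and for every `ε > 0` there is `δ > 0` with `|f(y)| < 1 - δ`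
whenever `‖y‖ ≤ 1` and `‖y - x‖ > ε`. -/
theorem luc_strong_peak_point
    {X : Type*} [NormedAddCommGroup X] [NormedSpace ℂ X] [CompleteSpace X]
    (x : X) (hx : ‖x‖ = 1)
    (hluc : ∀ y : ℕ → X, Tendsto (fun n => ‖y n‖) atTop (𝓝 1) →
      Tendsto (fun n => ‖x + y n‖) atTop (𝓝 2) →
      Tendsto (fun n => ‖y n - x‖) atTop (𝓝 0)) :
    ∃ x' : X →L[ℂ] ℂ, ‖x'‖ = 1 ∧ (1 + x' x) / 2 = 1 ∧
      ∀ ε > 0, ∃ δ > 0, ∀ y : X, ‖y‖ ≤ 1 → ε < ‖y - x‖ →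
        ‖(1 + x' y) / 2‖ < 1 - δ :=
  luc_strong_peak_point_general x hx hluc
end
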